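/- With notation as above, define a graph on S_n with an edge from u to v whenever PDS(v) is obtained by appending exactly one simple reflection to the left of PDS(u). This graph is a spanning tree of the 1-skeleton of the permutohedron (the Cayley graph of S_n with generators the simple transpositions), rooted at the identity. -/

import Mathlib

/-- The Coxeter length of a permutation of `Fin n`: its number of inversions. -/
def permLen {n : ℕ} (σ : Equiv.Perm (Fin n)) : ℕ :=
  (Finset.univ.filter (fun p : Fin n × Fin n => p.1 < p.2 ∧ σ p.2 < σ p.1)).card

/-- The simple transposition `s_a = (a, a+1)` of `Fin n` (as an element of `S_n`),
defined to be the identity if `a + 1 ≥ n`.  (Here positions are 0-indexed, so `sT n a`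
corresponds to the simple transposition `s_{a+1}` in 1-indexed notation.) -/
def sT (n : ℕ) (a : ℕ) : Equiv.Perm (Fin n) :=
  if h : a + 1 < n then Equiv.swap ⟨a, Nat.lt_of_succ_lt h⟩ ⟨a + 1, h⟩ else 1

/-- The group element of the expression `s_{i_t} ⋯ s_{i_1}` encoded by the list
`[i_t, …, i_1]` (leftmost letter first), where permutations are multiplied left to right
(i.e. acting on the right), so that `exprProd (a :: l) = exprProd l * sT n a`. -/
def exprProd (n : ℕ) (l : List ℕ) : Equiv.Perm (Fin n) :=
  l.foldr (fun a g => g * sT n a) 1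

/-- A word is reduced if its length equals the Coxeter length of its product. -/
def IsReducedW (n : ℕ) (l : List ℕ) : Prop :=
  permLen (exprProd n l) = l.length

/-- Greedy right-to-left computation of the positive distinguished subexpression:
the input list is the word read from the right (`ω.reverse`); the state is
`v_{(j)}`, and a letter is selected exactly when right-multiplying by it decreases
length.  Returns the final state `v_{(t)}` together with the selected letters in
processing order (right to left). -/
def pdsAux (n : ℕ) : Equiv.Perm (Fin n) → List ℕ → Equiv.Perm (Fin n) × List ℕ
  | v, [] => (v, [])
  | v, a :: rest =>
    if permLen (sT n a * v) < permLen v then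
      ((pdsAux n (sT n a * v) rest).1, a :: (pdsAux n (sT n a * v) rest).2)
    else pdsAux n v rest

/-- The positive distinguished subexpression of `v` inside the word `ω`
(read in word order, leftmost letter first). -/
def pds (n : ℕ) (v : Equiv.Perm (Fin n)) (ω : List ℕ) : List ℕ :=
  (pdsAux n v ω.reverse).2.reverse

/-- The canonical reduced word `(s_1)(s_2 s_1)⋯(s_{n-1}⋯s_2 s_1)` for the longest element
of `S_n` (0-indexed letters: `[0] ++ [1,0] ++ ⋯ ++ [n-2,…,1,0]`). -/
def w0word (n : ℕ) : List ℕ :=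
  (List.range (n - 1)).flatMap (fun j => (List.range (j + 1)).reverse)

/-- The positive distinguished subexpression of `v` inside the canonical reduced word
for the longest element of `S_n`. -/
def PDSw (n : ℕ) (v : Equiv.Perm (Fin n)) : List ℕ := pds n v (w0word n)

/-- The tree on `S_n` whose edges join `u` and `v` when `PDS(v)` is obtained by appending
exactly one simple reflection to the left of `PDS(u)`. -/
def treeGraph (n : ℕ) : SimpleGraph (Equiv.Perm (Fin n)) where
  Adj u v := u ≠ v ∧ ∃ a : ℕ, PDSw n v = a :: PDSw n u ∨ PDSw n u = a :: PDSw n v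
  symm := by
    constructor
    rintro u v ⟨h, a, h2⟩
    exact ⟨h.symm, a, h2.symm⟩
  loopless := by
    constructor
    rintro u ⟨h, -⟩
    exact h rfl

/-- The 1-skeleton of the permutohedron: the Cayley graph of `S_n` with edges
`{u, u * s_i}` for the simple transpositions `s_i`. -/
def permGraph (n : ℕ) : SimpleGraph (Equiv.Perm (Fin n)) where
  Adj u v := u ≠ v ∧ ∃ a : ℕ, a + 1 < n ∧ (v = u * sT n a ∨ u = v * sT n a)
  symm := by
    constructor
    rintro u v ⟨h, a, ha, h2⟩
    exact ⟨h.symm, a, ha, h2.symm⟩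
  loopless := by
    constructor
    rintro u ⟨h, -⟩
    exact h rfl

/-!
Write `y = v⁻¹` in one-line notation. Scanning the canonical word for `w₀` from the right, the
greedy computation of `PDS(v)` selects the letter `c` exactly when `y` has a descent at `c`, and
then swaps the entries `c, c + 1`: it is bubble sort of `y`, so it ends at the identity and the
product of `PDS(v)` is `v`. If the last swap is at `a`, it exchanged the values `a + 1, a`, which
were never compared before; bubble sort of `v * s_a`, i.e. of `y` with these two values
exchanged, therefore performs the same swaps except the last one, so `PDS(v * s_a)` is `PDS(v)`
with its first letter removed. Ranking vertices by the length of their `PDS`, every `v ≠ 1` has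
exactly one tree neighbour of smaller rank, namely `v * s_a`, and this forces a spanning tree.
-/

open Equiv

section SimpleTransposition

variable {n : ℕ}

lemma sT_of_lt {a : ℕ} (h : a + 1 < n) : sT n a = swap ⟨a, by omega⟩ ⟨a + 1, h⟩ :=
  dif_pos h

lemma sT_of_not_lt {a : ℕ} (h : ¬ a + 1 < n) : sT n a = 1 :=
  dif_neg h

lemma val_sT_apply {a : ℕ} (h : a + 1 < n) (p : Fin n) :
    (sT n a p : ℕ) = if (p : ℕ) = a then a + 1 else if (p : ℕ) = a + 1 then a else p := by
  rw [sT_of_lt h, swap_apply_def]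
  split_ifs <;> simp_all [Fin.ext_iff]

@[simp]
lemma sT_mul_self (a : ℕ) : sT n a * sT n a = 1 := by
  by_cases h : a + 1 < n
  · rw [sT_of_lt h, swap_mul_self]
  · rw [sT_of_not_lt h, one_mul]

@[simp]
lemma sT_inv (a : ℕ) : (sT n a)⁻¹ = sT n a :=
  inv_eq_of_mul_eq_one_right (sT_mul_self a)

end SimpleTransposition

section PermLen

variable {n : ℕ}

@[simp]
lemma permLen_one : permLen (1 : Perm (Fin n)) = 0 := by
  rw [permLen, Finset.card_eq_zero, Finset.filter_eq_empty_iff]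
  exact fun p _ hp => lt_asymm hp.1 hp.2

lemma val_apply_eq_iff_val_eq_inv_apply (x : Perm (Fin n)) (p : Fin n) {b : ℕ} (hb : b < n) :
    (x p : ℕ) = b ↔ (p : ℕ) = x⁻¹ ⟨b, hb⟩ := by
  rw [← Fin.ext_iff, Perm.eq_inv_iff_eq, Fin.ext_iff]

/-- Left multiplication by `s_a` exchanges the values `a, a+1`; when `a` stands left of `a+1`
this creates exactly one new inversion, at their positions. -/
lemma permLen_sT_mul_of_lt {a : ℕ} (h : a + 1 < n) (x : Perm (Fin n))
    (hx : x⁻¹ ⟨a, by omega⟩ < x⁻¹ ⟨a + 1, h⟩) :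
    permLen (sT n a * x) = permLen x + 1 := by
  have hnew : ∀ p q : Fin n, (p < q ∧ (sT n a * x) q < (sT n a * x) p) ↔
      (p, q) = (x⁻¹ ⟨a, by omega⟩, x⁻¹ ⟨a + 1, h⟩) ∨ (p < q ∧ x q < x p) := by
    intro p q
    have hinj : (x p : ℕ) = x q → p = q := fun hpq => x.injective (Fin.ext hpq)
    have hpa := val_apply_eq_iff_val_eq_inv_apply x p (b := a) (by omega)
    have hpb := val_apply_eq_iff_val_eq_inv_apply x p h
    have hqa := val_apply_eq_iff_val_eq_inv_apply x q (b := a) (by omega)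
    have hqb := val_apply_eq_iff_val_eq_inv_apply x q h
    simp only [Prod.mk.injEq, Fin.lt_def, Perm.mul_apply, val_sT_apply h, Fin.ext_iff]
      at hx hinj ⊢
    split_ifs <;> omega
  have hnotin : (x⁻¹ ⟨a, by omega⟩, x⁻¹ ⟨a + 1, h⟩) ∉
      Finset.univ.filter (fun p : Fin n × Fin n => p.1 < p.2 ∧ x p.2 < x p.1) := by
    simp [Fin.mk_lt_mk]
  rw [permLen, permLen, ← Finset.card_insert_of_notMem hnotin]
  congr 1
  ext ⟨p, q⟩
  simp only [Finset.mem_filter, Finset.mem_univ, true_and, Finset.mem_insert, hnew]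

lemma permLen_sT_mul_lt_iff {a : ℕ} (h : a + 1 < n) (x : Perm (Fin n)) :
    permLen (sT n a * x) < permLen x ↔ x⁻¹ ⟨a + 1, h⟩ < x⁻¹ ⟨a, by omega⟩ := by
  rcases lt_trichotomy (x⁻¹ ⟨a, by omega⟩) (x⁻¹ ⟨a + 1, h⟩) with hlt | heq | hgt
  · rw [permLen_sT_mul_of_lt h x hlt]
    exact iff_of_false (by omega) (lt_asymm hlt)
  · simp [Fin.ext_iff] at heq
  · have hsx : (sT n a * x)⁻¹ ⟨a, by omega⟩ < (sT n a * x)⁻¹ ⟨a + 1, h⟩ := by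
      simpa [Perm.mul_apply, sT_of_lt h] using hgt
    have := permLen_sT_mul_of_lt h _ hsx
    rw [← mul_assoc, sT_mul_self, one_mul] at this
    exact iff_of_true (by omega) hgt

end PermLen

section GreedyRun

variable {n : ℕ}

def pdsStep (n c : ℕ) (x : Perm (Fin n)) : Perm (Fin n) :=
  if permLen (sT n c * x) < permLen x then sT n c * x else x

lemma pdsAux_fst_eq_foldl (x : Perm (Fin n)) (l : List ℕ) :
    (pdsAux n x l).1 = l.foldl (fun y c => pdsStep n c y) x := by
  induction l generalizing x with
  | nil => rfl
  | cons c l ih =>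
    rw [List.foldl_cons, ← ih, pdsAux, pdsStep]
    split_ifs <;> rfl

@[simp]
lemma exprProd_nil : exprProd n [] = 1 := rfl

@[simp]
lemma exprProd_cons (a : ℕ) (l : List ℕ) : exprProd n (a :: l) = exprProd n l * sT n a := rfl

lemma exprProd_concat (l : List ℕ) (a : ℕ) : exprProd n (l ++ [a]) = sT n a * exprProd n l := by
  induction l with
  | nil => simp
  | cons b l ih => rw [List.cons_append, exprProd_cons, ih, exprProd_cons, mul_assoc]

lemma exprProd_pdsAux_mul (x : Perm (Fin n)) (l : List ℕ) :
    exprProd n (pdsAux n x l).2.reverse * (pdsAux n x l).1 = x := by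
  induction l generalizing x with
  | nil => simp [pdsAux]
  | cons c l ih =>
    rw [pdsAux]
    split_ifs
    · rw [List.reverse_cons, exprProd_concat, mul_assoc, ih, ← mul_assoc, sT_mul_self, one_mul]
    · exact ih x

lemma eq_sT_of_pdsAux_sT_mul_eq {x : Perm (Fin n)} {c : ℕ} {l : List ℕ}
    (h : pdsAux n (sT n c * x) l = (1, [])) : x = sT n c := by
  have hprod := exprProd_pdsAux_mul (sT n c * x) l
  rw [h, List.reverse_nil, exprProd_nil, one_mul] at hprod
  rw [← sT_inv]
  exact eq_inv_of_mul_eq_one_right hprod.symm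

lemma lt_of_mem_pdsAux_snd {x : Perm (Fin n)} {l : List ℕ} {a : ℕ}
    (h : a ∈ (pdsAux n x l).2) : a + 1 < n := by
  induction l generalizing x with
  | nil => simp [pdsAux] at h
  | cons c l ih =>
    rw [pdsAux] at h
    split_ifs at h with hsel
    · rcases List.mem_cons.mp h with rfl | h
      · by_contra ha
        simp [sT_of_not_lt ha] at hsel
      · exact ih h
    · exact ih h

end GreedyRun

section BubbleSort

variable {n : ℕ}

lemma val_apply_lt_of_forall_apply_eq {x : Perm (Fin n)} {k : ℕ}
    (hfix : ∀ p : Fin n, k ≤ p → x p = p) {q : Fin n} (hq : (q : ℕ) < k) :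
    (x q : ℕ) < k := by
  by_contra hxq
  have := x.injective (hfix (x q) (by omega))
  omega

lemma inv_apply_eq_of_forall_apply_eq {x : Perm (Fin n)} {k : ℕ}
    (hfix : ∀ p : Fin n, k ≤ p → x p = p) (p : Fin n) (hp : k ≤ p) : x⁻¹ p = p :=
  Perm.inv_eq_iff_eq.mpr (hfix p hp).symm

/-- One comparison of a bubble pass on `x⁻¹`: its entry `m + 1`, at position `x (m + 1) ≥ c`,
ends up at a position `≥ c + 1`. -/
lemma pdsStep_bubble {m c : ℕ} (hm : m + 1 < n) (hc : c ≤ m) {x : Perm (Fin n)}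
    (hfix : ∀ p : Fin n, m + 2 ≤ p → x p = p) (hpos : c ≤ x ⟨m + 1, hm⟩) :
    (∀ p : Fin n, m + 2 ≤ p → pdsStep n c x p = p) ∧
      c + 1 ≤ pdsStep n c x ⟨m + 1, hm⟩ := by
  have hc1 : c + 1 < n := by omega
  have hxm := val_apply_lt_of_forall_apply_eq hfix (q := ⟨m + 1, hm⟩) (by simp)
  have hinv := inv_apply_eq_of_forall_apply_eq hfix
  have hic := val_apply_lt_of_forall_apply_eq hinv (q := ⟨c, by omega⟩)
    (show c < m + 2 by omega)
  have hic1 := val_apply_lt_of_forall_apply_eq hinv (q := ⟨c + 1, hc1⟩)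
    (show c + 1 < m + 2 by omega)
  have hne : (x⁻¹ ⟨c, by omega⟩ : ℕ) ≠ x⁻¹ ⟨c + 1, hc1⟩ := by
    rw [Ne, ← Fin.ext_iff, x⁻¹.injective.eq_iff, Fin.mk.injEq]
    omega
  have hA := val_apply_eq_iff_val_eq_inv_apply x ⟨m + 1, hm⟩ (b := c) (by omega)
  have hB := val_apply_eq_iff_val_eq_inv_apply x ⟨m + 1, hm⟩ hc1
  dsimp only at hA hB
  unfold pdsStep
  split_ifs with hdesc <;> rw [permLen_sT_mul_lt_iff hc1, Fin.lt_def] at hdesc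
  · refine ⟨fun p hp => Fin.ext ?_, ?_⟩
    · rw [Perm.mul_apply, hfix p hp, val_sT_apply hc1]
      split_ifs <;> omega
    · rw [Perm.mul_apply, val_sT_apply hc1]
      split_ifs <;> omega
  · exact ⟨hfix, by omega⟩

lemma foldl_pdsStep_range' {m : ℕ} (hm : m + 1 < n) (k c : ℕ) (hck : c + k = m + 1)
    {x : Perm (Fin n)} (hfix : ∀ p : Fin n, m + 2 ≤ p → x p = p)
    (hpos : c ≤ x ⟨m + 1, hm⟩) :
    ∀ p : Fin n, m + 1 ≤ p → (List.range' c k).foldl (fun y c => pdsStep n c y) x p = p := by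
  induction k generalizing c x with
  | zero =>
    have hxm := val_apply_lt_of_forall_apply_eq hfix (q := ⟨m + 1, hm⟩) (by simp)
    intro p hp
    rcases hp.lt_or_eq with hp | hp
    · exact hfix p hp
    · obtain rfl : p = ⟨m + 1, hm⟩ := Fin.ext hp.symm
      exact Fin.ext (by simp only [List.range'_zero, List.foldl_nil]; omega)
  | succ k ih =>
    obtain ⟨hfix', hpos'⟩ := pdsStep_bubble hm (by omega) hfix hpos
    exact ih (c + 1) (by omega) hfix' hpos'

lemma foldl_pdsStep_bubbleSort (m : ℕ) (hm : m < n) {x : Perm (Fin n)}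
    (hfix : ∀ p : Fin n, m + 1 ≤ p → x p = p) :
    ((List.range m).reverse.flatMap (fun j => List.range (j + 1))).foldl
      (fun y c => pdsStep n c y) x = 1 := by
  induction m generalizing x with
  | zero =>
    ext p
    rcases Nat.eq_zero_or_pos p with hp | hp
    · have := val_apply_lt_of_forall_apply_eq hfix (q := p) (by omega)
      simp only [List.range_zero, List.reverse_nil, List.flatMap_nil, List.foldl_nil,
        Perm.one_apply]
      omega
    · exact congrArg Fin.val (hfix p hp)
  | succ m ih =>
    rw [List.range_succ, List.reverse_append, List.reverse_singleton, List.singleton_append,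
      List.flatMap_cons, List.foldl_append, List.range_eq_range']
    exact ih (by omega) (foldl_pdsStep_range' hm (m + 1) 0 (by omega) hfix (Nat.zero_le _))

lemma pdsAux_w0word_reverse_fst (x : Perm (Fin n)) : (pdsAux n x (w0word n).reverse).1 = 1 := by
  rcases Nat.eq_zero_or_pos n with rfl | hn
  · exact Subsingleton.elim _ _
  · rw [pdsAux_fst_eq_foldl, w0word, List.reverse_flatMap]
    simp only [Function.comp_def, List.reverse_reverse]
    exact foldl_pdsStep_bubbleSort (n - 1) (by omega) fun p hp => by have := p.2; omega

end BubbleSort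

section LastLetter

variable {n : ℕ}

lemma sT_mul_apply_lt_of_lt {c : ℕ} (hc : c + 1 < n) {x : Perm (Fin n)} {p q : Fin n}
    (h : x p < x q) (hpq : ¬ ((x p : ℕ) = c ∧ (x q : ℕ) = c + 1)) :
    (sT n c * x) p < (sT n c * x) q := by
  rw [Fin.lt_def] at h ⊢
  rw [Perm.mul_apply, Perm.mul_apply, val_sT_apply hc, val_sT_apply hc]
  split_ifs <;> omega

lemma sT_mul_apply_lt_of_permLen_lt {c : ℕ} {x : Perm (Fin n)}
    (hx : permLen (sT n c * x) < permLen x) {p q : Fin n} (hpq : p < q) (h : x p < x q) :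
    (sT n c * x) p < (sT n c * x) q := by
  have hc : c + 1 < n := by
    by_contra hc
    simp [sT_of_not_lt hc] at hx
  rw [permLen_sT_mul_lt_iff hc, Fin.lt_def] at hx
  rw [Fin.lt_def] at hpq
  refine sT_mul_apply_lt_of_lt hc h fun ⟨hpc, hqc⟩ => ?_
  rw [val_apply_eq_iff_val_eq_inv_apply x p (b := c) (by omega)] at hpc
  rw [val_apply_eq_iff_val_eq_inv_apply x q hc] at hqc
  omega

/-- Once `a` stands left of `a + 1` in `x⁻¹`, they are never exchanged again, so the greedy run
cannot end with the letter `a`. -/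
lemma pdsAux_ne_one_concat {a : ℕ} (ha : a + 1 < n) (l : List ℕ) {x : Perm (Fin n)}
    (hx : x ⟨a, by omega⟩ < x ⟨a + 1, ha⟩) (sel : List ℕ) :
    pdsAux n x l ≠ (1, sel ++ [a]) := by
  induction l generalizing x sel with
  | nil => simp [pdsAux]
  | cons c l ih =>
    intro hrun
    rw [pdsAux] at hrun
    split_ifs at hrun with hsel
    · cases sel with
      | nil =>
        simp only [List.nil_append, Prod.mk.injEq, List.cons.injEq] at hrun
        obtain ⟨hfst, rfl, hsnd⟩ := hrun
        rw [eq_sT_of_pdsAux_sT_mul_eq (Prod.ext hfst hsnd), Fin.lt_def, val_sT_apply ha,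
          val_sT_apply ha] at hx
        simp at hx
      | cons s sel =>
        simp only [List.cons_append, Prod.mk.injEq, List.cons.injEq] at hrun
        have hx' := sT_mul_apply_lt_of_permLen_lt hsel (Fin.mk_lt_mk.mpr (Nat.lt_succ_self a)) hx
        exact ih hx' sel (Prod.ext hrun.1 hrun.2.2)
    · exact ih hx sel hrun

lemma sT_mul_eq_mul_sT {a c : ℕ} (ha : a + 1 < n) (hc : c + 1 < n) {x : Perm (Fin n)}
    (hxa : x ⟨a, by omega⟩ = ⟨c + 1, hc⟩) (hxa1 : x ⟨a + 1, ha⟩ = ⟨c, by omega⟩) :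
    sT n c * x = x * sT n a := by
  rw [sT_of_lt ha, mul_swap_eq_swap_mul, hxa1, hxa, swap_comm, sT_of_lt hc]

lemma permLen_sT_mul_mul_sT_lt_iff {a c : ℕ} (ha : a + 1 < n) (hc : c + 1 < n)
    {x : Perm (Fin n)} (hx : x ⟨a + 1, ha⟩ < x ⟨a, by omega⟩)
    (hxc : ¬ ((x ⟨a + 1, ha⟩ : ℕ) = c ∧ (x ⟨a, by omega⟩ : ℕ) = c + 1)) :
    permLen (sT n c * (x * sT n a)) < permLen (x * sT n a) ↔
      permLen (sT n c * x) < permLen x := by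
  rw [permLen_sT_mul_lt_iff hc, permLen_sT_mul_lt_iff hc, mul_inv_rev, sT_inv,
    Perm.mul_apply, Perm.mul_apply, Fin.lt_def, Fin.lt_def, val_sT_apply ha, val_sT_apply ha]
  have h1 := val_apply_eq_iff_val_eq_inv_apply x ⟨a + 1, ha⟩ (b := c) (by omega)
  have h2 := val_apply_eq_iff_val_eq_inv_apply x ⟨a + 1, ha⟩ hc
  have h3 := val_apply_eq_iff_val_eq_inv_apply x ⟨a, by omega⟩ (b := c) (by omega)
  have h4 := val_apply_eq_iff_val_eq_inv_apply x ⟨a, by omega⟩ hc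
  have hne : (x⁻¹ ⟨c, by omega⟩ : ℕ) ≠ x⁻¹ ⟨c + 1, hc⟩ := by
    rw [Ne, ← Fin.ext_iff, x⁻¹.injective.eq_iff, Fin.mk.injEq]
    omega
  dsimp only at h1 h2 h3 h4
  rw [Fin.lt_def] at hx
  split_ifs <;> omega

/-- The step at which the runs from `x` and `x * s_a` diverge: afterwards both states equal
`x * s_a`, so this must be the last letter selected from `x`. -/
lemma pdsAux_mul_sT_cons_of_apply_eq {a c : ℕ} (ha : a + 1 < n) (hc : c + 1 < n) (l : List ℕ)
    {x : Perm (Fin n)} (hxa : x ⟨a, by omega⟩ = ⟨c + 1, hc⟩)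
    (hxa1 : x ⟨a + 1, ha⟩ = ⟨c, by omega⟩)
    {sel : List ℕ} (hrun : pdsAux n x (c :: l) = (1, sel ++ [a])) :
    pdsAux n (x * sT n a) (c :: l) = (1, sel) := by
  have hcomm := sT_mul_eq_mul_sT ha hc hxa hxa1
  have hsel : permLen (sT n c * x) < permLen x := by
    rw [permLen_sT_mul_lt_iff hc, Perm.inv_eq_iff_eq.mpr hxa.symm,
      Perm.inv_eq_iff_eq.mpr hxa1.symm]
    exact Fin.mk_lt_mk.mpr (Nat.lt_succ_self a)
  have hnsel : ¬ permLen (sT n c * (x * sT n a)) < permLen (x * sT n a) := by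
    rw [← hcomm, ← mul_assoc, sT_mul_self, one_mul]
    exact lt_asymm hsel
  rw [pdsAux, if_pos hsel] at hrun
  rw [pdsAux, if_neg hnsel, ← hcomm]
  cases sel with
  | nil =>
    simp only [List.nil_append, Prod.mk.injEq, List.cons.injEq] at hrun
    exact Prod.ext hrun.1 hrun.2.2
  | cons s sel =>
    simp only [List.cons_append, Prod.mk.injEq, List.cons.injEq] at hrun
    refine absurd (Prod.ext hrun.1 hrun.2.2) (pdsAux_ne_one_concat ha l ?_ sel)
    rw [Fin.lt_def, Perm.mul_apply, Perm.mul_apply, hxa, hxa1, val_sT_apply hc, val_sT_apply hc]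
    simp

lemma pdsAux_mul_sT {a : ℕ} (ha : a + 1 < n) (l : List ℕ) {x : Perm (Fin n)}
    (hx : x ⟨a + 1, ha⟩ < x ⟨a, by omega⟩) {sel : List ℕ}
    (hrun : pdsAux n x l = (1, sel ++ [a])) : pdsAux n (x * sT n a) l = (1, sel) := by
  induction l generalizing x sel with
  | nil => simp [pdsAux] at hrun
  | cons c l ih =>
    by_cases hc : c + 1 < n
    swap
    · simp only [pdsAux, sT_of_not_lt hc, one_mul, lt_irrefl, if_false] at hrun ⊢
      exact ih hx hrun
    by_cases hxc : (x ⟨a + 1, ha⟩ : ℕ) = c ∧ (x ⟨a, by omega⟩ : ℕ) = c + 1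
    · exact pdsAux_mul_sT_cons_of_apply_eq ha hc l (Fin.ext hxc.2) (Fin.ext hxc.1) hrun
    have hiff := permLen_sT_mul_mul_sT_lt_iff ha hc hx hxc
    rw [pdsAux] at hrun ⊢
    by_cases hsel : permLen (sT n c * x) < permLen x
    · rw [if_pos hsel] at hrun
      rw [if_pos (hiff.mpr hsel)]
      cases sel with
      | nil =>
        simp only [List.nil_append, Prod.mk.injEq, List.cons.injEq] at hrun
        obtain ⟨hfst, rfl, hsnd⟩ := hrun
        rw [eq_sT_of_pdsAux_sT_mul_eq (Prod.ext hfst hsnd), val_sT_apply hc,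
          val_sT_apply hc] at hxc
        simp at hxc
      | cons s sel =>
        simp only [List.cons_append, Prod.mk.injEq, List.cons.injEq] at hrun
        rw [← mul_assoc, ih (sT_mul_apply_lt_of_lt hc hx hxc) (Prod.ext hrun.1 hrun.2.2),
          hrun.2.1]
    · rw [if_neg hsel] at hrun
      rw [if_neg (mt hiff.mp hsel)]
      exact ih hx hrun

end LastLetter

section PDSw

variable {n : ℕ}

lemma exprProd_PDSw (v : Perm (Fin n)) : exprProd n (PDSw n v) = v := by
  simpa [PDSw, pds, pdsAux_w0word_reverse_fst] using exprProd_pdsAux_mul v (w0word n).reverse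

lemma PDSw_injective : Function.Injective (PDSw n) := fun u v h => by
  rw [← exprProd_PDSw u, h, exprProd_PDSw]

lemma pdsAux_one (l : List ℕ) : pdsAux n 1 l = (1, []) := by
  induction l with
  | nil => rfl
  | cons c l ih => simp [pdsAux, ih]

lemma PDSw_one : PDSw n 1 = [] := by
  simp [PDSw, pds, pdsAux_one]

lemma PDSw_eq_nil_iff {v : Perm (Fin n)} : PDSw n v = [] ↔ v = 1 := by
  rw [← PDSw_one, PDSw_injective.eq_iff]

lemma lt_of_mem_PDSw {v : Perm (Fin n)} {a : ℕ} (h : a ∈ PDSw n v) : a + 1 < n :=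
  lt_of_mem_pdsAux_snd (List.mem_reverse.mp h)

lemma PDSw_mul_sT {v : Perm (Fin n)} {a : ℕ} {t : List ℕ} (hv : PDSw n v = a :: t) :
    PDSw n (v * sT n a) = t := by
  have ha : a + 1 < n := lt_of_mem_PDSw (hv ▸ List.mem_cons_self)
  have hrun : pdsAux n v (w0word n).reverse = (1, t.reverse ++ [a]) := by
    refine Prod.ext (pdsAux_w0word_reverse_fst v) ?_
    rw [← List.reverse_reverse (pdsAux n v _).2]
    change (PDSw n v).reverse = _
    rw [hv, List.reverse_cons]
  have hx : v ⟨a + 1, ha⟩ < v ⟨a, by omega⟩ :=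
    lt_of_le_of_ne (not_lt.mp fun h => pdsAux_ne_one_concat ha _ h _ hrun)
      (v.injective.ne (by simp))
  rw [PDSw, pds, pdsAux_mul_sT ha _ hx hrun, List.reverse_reverse]

lemma eq_mul_sT_of_PDSw_eq_cons {u v : Perm (Fin n)} {a : ℕ} (h : PDSw n v = a :: PDSw n u) :
    a + 1 < n ∧ v = u * sT n a :=
  ⟨lt_of_mem_PDSw (h ▸ List.mem_cons_self),
    by rw [← exprProd_PDSw v, h, exprProd_cons, exprProd_PDSw]⟩

end PDSw

theorem SimpleGraph.isTree_of_rank {V : Type*} {G : SimpleGraph V} (r : V) (f : V → ℕ)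
    (hdown : ∀ v, v ≠ r → ∃ w, G.Adj v w ∧ f w < f v)
    (hne : ∀ v w, G.Adj v w → f v ≠ f w)
    (huniq : ∀ v w w', G.Adj v w → G.Adj v w' → f w < f v → f w' < f v → w = w') :
    G.IsTree := by
  have hreach : ∀ v, G.Reachable v r := by
    intro v
    induction hk : f v using Nat.strong_induction_on generalizing v with
    | _ k ih =>
      by_cases hv : v = r
      · rw [hv]
      · obtain ⟨w, hvw, hw⟩ := hdown v hv
        exact hvw.reachable.trans (ih (f w) (hk ▸ hw) w rfl)
  refine ⟨(connected_iff G).mpr ⟨fun u v => (hreach u).trans (hreach v).symm, ⟨r⟩⟩,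
    fun v c hc => ?_⟩
  classical
  -- a vertex of maximal rank on the cycle has two distinct neighbours of smaller rank
  obtain ⟨u, hu, hmax⟩ := c.support.toFinset.exists_max_image f ⟨v, by simp⟩
  rw [List.mem_toFinset] at hu
  have hc' := hc.rotate hu
  have hlt : ∀ w, G.Adj u w → w ∈ (c.rotate u hu).support → f w < f u := fun w huw hw =>
    lt_of_le_of_ne (hmax w (by simpa using hw)) (hne u w huw).symm
  have hsnd := (c.rotate u hu).adj_snd hc'.not_nil
  have hpen := ((c.rotate u hu).adj_penultimate hc'.not_nil).symm
  exact hc'.snd_ne_penultimate (huniq u _ _ hsnd hpen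
    (hlt _ hsnd (Walk.getVert_mem_support _ _)) (hlt _ hpen (Walk.getVert_mem_support _ _)))

lemma treeGraph_le_permGraph (n : ℕ) : treeGraph n ≤ permGraph n := by
  rintro u v ⟨huv, a, h | h⟩
  · obtain ⟨ha, rfl⟩ := eq_mul_sT_of_PDSw_eq_cons h
    exact ⟨huv, a, ha, Or.inl rfl⟩
  · obtain ⟨ha, rfl⟩ := eq_mul_sT_of_PDSw_eq_cons h
    exact ⟨huv, a, ha, Or.inr rfl⟩

lemma treeGraph_isTree (n : ℕ) : (treeGraph n).IsTree := by
  refine SimpleGraph.isTree_of_rank 1 (fun v => (PDSw n v).length) ?_ ?_ ?_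
  · intro v hv
    obtain ⟨a, t, hvt⟩ := List.exists_cons_of_ne_nil (mt PDSw_eq_nil_iff.mp hv)
    have htail := PDSw_mul_sT hvt
    refine ⟨v * sT n a, ⟨fun h => ?_, a, Or.inr (by rw [hvt, htail])⟩, by simp [hvt, htail]⟩
    rw [← h, hvt] at htail
    exact List.cons_ne_self a t htail
  · rintro v w ⟨-, a, h | h⟩ <;> simp [h]
  · rintro v w w' ⟨-, a, h | h⟩ ⟨-, b, h' | h'⟩ hw hw' <;>
      simp only [h, h', List.length_cons] at hw hw' ⊢
    all_goals first | omega | exact PDSw_injective (List.cons.inj (h.symm.trans h')).2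

/-- The graph whose edges join `u`, `v` whenever `PDS(v)` is obtained by appending one
simple reflection to the left of `PDS(u)` is a spanning tree of the 1-skeleton of the
permutohedron (the Cayley graph of `S_n` with the simple transpositions), rooted at the
identity (the unique vertex with empty PDS). -/
theorem stmt4 (n : ℕ) :
    treeGraph n ≤ permGraph n ∧ (treeGraph n).IsTree ∧ PDSw n 1 = [] :=
  ⟨treeGraph_le_permGraph n, treeGraph_isTree n, PDSw_one⟩
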